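/- (Membership lemma, single point) There exists a constant C > 0, independent of m, n and k, such that for every m, n, k ∈ ℕ with k ≥ 1, all vectors b, a_1, …, a_n ∈ ℝ^m, and every fixed x ∈ ℝ^n with b ≠ Σ_{i=1}^n x_i·a_i, the probability, with respect to the product Gaussian measure on k×m real matrices P (each entry i.i.d. standard normal N(0,1)), of the event {T_P(b) ≠ Σ_{i=1}^n x_i·T_P(a_i)} is at least 1 − 2·exp(−C·k), where T_P(y) = (1/√k)·P·y. -/

import Mathlib

open MeasureTheory ProbabilityTheory ENNReal

/-- The product Gaussian measure on `k × m` real matrices: each entry is an independent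
standard normal `N(0,1)` random variable. -/
noncomputable def gaussMeasure (k m : ℕ) : Measure (Fin k → Fin m → ℝ) :=
  Measure.pi fun _ : Fin k => Measure.pi fun _ : Fin m => gaussianReal 0 1

/-- The random linear map associated to a `k × m` matrix `P`: `T_P(y) = (1/√k) · P · y`. -/
noncomputable def TP {k m : ℕ} (P : Fin k → Fin m → ℝ)
    (x : EuclideanSpace ℝ (Fin m)) : EuclideanSpace ℝ (Fin k) :=
  (Real.sqrt k)⁻¹ • (EuclideanSpace.equiv (Fin k) ℝ).symm
    ((Matrix.of P).mulVec (EuclideanSpace.equiv (Fin m) ℝ x))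

/-!
With `v = b - ∑ i, x i • a i ≠ 0`, linearity gives `T_P b - ∑ i, x i • T_P (a i) = T_P v`, whose
first coordinate is `(1/√k) ⟪P₀, v⟫` for the first row `P₀` of `P`. That row is a standard
Gaussian vector, so `⟪P₀, v⟫` is distributed as `N(0, ‖v‖²)`, which has no atoms. Hence the
failure event is null: the probability in question is `1`, and the bound holds for every `C > 0`.
-/

section stdGaussian

variable {E : Type*} [NormedAddCommGroup E] [InnerProductSpace ℝ E] [FiniteDimensional ℝ E]
  [MeasurableSpace E] [BorelSpace E]

lemma stdGaussian_map_strongDual (L : StrongDual ℝ E) :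
    (stdGaussian E).map L = gaussianReal 0 (‖L‖ ^ 2).toNNReal := by
  rw [IsGaussian.map_eq_gaussianReal, integral_strongDual_stdGaussian, variance_dual_stdGaussian]

lemma stdGaussian_preimage_singleton_eq_zero {L : StrongDual ℝ E} (hL : L ≠ 0) (c : ℝ) :
    stdGaussian E (L ⁻¹' {c}) = 0 := by
  have : NullSingletonClass (gaussianReal 0 (‖L‖ ^ 2).toNNReal) :=
    nullSingletonClass_gaussianReal (by simpa [norm_pos_iff] using hL)
  rw [← Measure.map_apply L.continuous.measurable (measurableSet_singleton c),
    stdGaussian_map_strongDual, measure_singleton]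

end stdGaussian

lemma pi_gaussianReal_dotProduct_eq_zero {ι : Type*} [Fintype ι] {v : ι → ℝ} (hv : v ≠ 0) :
    Measure.pi (fun _ : ι => gaussianReal 0 1) {p | p ⬝ᵥ v = 0} = 0 := by
  have hL : innerSL ℝ (WithLp.toLp 2 v) ≠ 0 := by
    rw [← norm_ne_zero_iff, innerSL_apply_norm]
    simpa using hv
  have hset : {p : ι → ℝ | p ⬝ᵥ v = 0} =
      WithLp.toLp 2 ⁻¹' (innerSL ℝ (WithLp.toLp 2 v) ⁻¹' {0}) := by
    ext p
    simp [EuclideanSpace.inner_toLp_toLp]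
  rw [hset, ← MeasurableEquiv.coe_toLp, ← MeasurableEquiv.map_apply, MeasurableEquiv.coe_toLp,
    map_pi_eq_stdGaussian, stdGaussian_preimage_singleton_eq_zero hL]

instance (k m : ℕ) : IsProbabilityMeasure (gaussMeasure k m) := by
  unfold gaussMeasure
  infer_instance

section TP

variable {k m : ℕ} (P : Fin k → Fin m → ℝ)

lemma TP_eq : TP P = ⇑((Real.sqrt k)⁻¹ • Matrix.toLpLin 2 2 (Matrix.of P)) := rfl

lemma TP_apply (y : EuclideanSpace ℝ (Fin m)) (i : Fin k) :
    TP P y i = (Real.sqrt k)⁻¹ * (P i ⬝ᵥ WithLp.ofLp y) := rfl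

lemma TP_sub_sum_smul {n : ℕ} (b : EuclideanSpace ℝ (Fin m))
    (a : Fin n → EuclideanSpace ℝ (Fin m)) (x : Fin n → ℝ) :
    TP P (b - ∑ i, x i • a i) = TP P b - ∑ i, x i • TP P (a i) := by
  simp only [TP_eq, map_sub, map_sum, map_smul]

end TP

lemma gaussMeasure_TP_eq_zero {k m : ℕ} (hk : 1 ≤ k) {v : EuclideanSpace ℝ (Fin m)}
    (hv : v ≠ 0) : gaussMeasure k m {P | TP P v = 0} = 0 := by
  let i₀ : Fin k := ⟨0, hk⟩
  have hsub : {P | TP P v = 0} ⊆ Function.eval i₀ ⁻¹' {p | p ⬝ᵥ WithLp.ofLp v = 0} := by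
    intro P (hP : TP P v = 0)
    have hrow : (Real.sqrt k)⁻¹ * (P i₀ ⬝ᵥ WithLp.ofLp v) = 0 := by
      rw [← TP_apply, hP, PiLp.zero_apply]
    exact (mul_eq_zero.mp hrow).resolve_left (by positivity)
  exact measure_mono_null hsub <| Measure.pi_eval_preimage_null _ <|
    pi_gaussianReal_dotProduct_eq_zero (by simpa using hv)

/-- **Membership lemma, single point.**
There is a constant `C > 0`, independent of `m`, `n` and `k`, such that for all `m`, `n`,
`k ≥ 1`, all `b, a_1, …, a_n ∈ ℝ^m` and every fixed `x ∈ ℝ^n` with `b ≠ Σ_i x_i · a_i`,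
the Gaussian measure of the set of matrices `P` with `T_P b ≠ Σ_i x_i · T_P (a_i)` is at
least `1 - 2·exp(-C·k)`. -/
theorem membership_lemma_single :
    ∃ C : ℝ, C > 0 ∧
      ∀ m n k : ℕ, 1 ≤ k →
        ∀ (b : EuclideanSpace ℝ (Fin m)) (a : Fin n → EuclideanSpace ℝ (Fin m))
          (x : Fin n → ℝ), b ≠ ∑ i, x i • a i →
          gaussMeasure k m {P | TP P b ≠ ∑ i, x i • TP P (a i)} ≥
            ENNReal.ofReal (1 - 2 * Real.exp (-C * k)) := by
  refine ⟨1, one_pos, fun m n k hk b a x hb => ?_⟩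
  have hgood : {P : Fin k → Fin m → ℝ | TP P b ≠ ∑ i, x i • TP P (a i)} =
      {P | TP P (b - ∑ i, x i • a i) = 0}ᶜ := by
    ext P
    simp [TP_sub_sum_smul, sub_eq_zero]
  have hnull := gaussMeasure_TP_eq_zero hk (sub_ne_zero.mpr hb)
  rw [hgood, measure_congr (ae_eq_univ.mpr (by rwa [compl_compl])), measure_univ]
  exact ENNReal.ofReal_le_one.mpr (by linarith [Real.exp_pos (-1 * k)])
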